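/- Let G_{ij} = 2(L - x_{max(i,j)}) for 0 < x_1 < ⋯ < x_m < L. Then for every κ > 0 the matrix I + κG is invertible, and the vector ψ = (I+κG)^{-1}1 has all components in (0,1]. -/
import Mathlib


open Matrix

/-- Splitting off the last term of a truncated sum. -/
lemma gmpb_sum_ite_succ {m : ℕ} (w : Fin m → ℝ) (t : ℕ) (ht : t < m) :
    (∑ k : Fin m, if (k : ℕ) < t + 1 then w k else 0)
      = (∑ k : Fin m, if (k : ℕ) < t then w k else 0) + w ⟨t, ht⟩ := by
  have key : ∀ k : Fin m, (if (k : ℕ) < t + 1 then w k else 0)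
      = (if (k : ℕ) < t then w k else 0) + (if k = ⟨t, ht⟩ then w k else 0) := by
    intro k
    have hkt : (k = (⟨t, ht⟩ : Fin m)) ↔ ((k : ℕ) = t) := by
      constructor
      · intro e; exact congrArg Fin.val e
      · intro e; exact Fin.ext e
    rcases Nat.lt_trichotomy (k : ℕ) t with hk | hk | hk
    · rw [if_pos (by omega), if_pos hk, if_neg (by rw [hkt]; omega), add_zero]
    · rw [if_pos (by omega), if_neg (by omega), if_pos (by rw [hkt]; omega), zero_add]
    · rw [if_neg (by omega), if_neg (by omega), if_neg (by rw [hkt]; omega), add_zero]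
  rw [Finset.sum_congr rfl fun k _ => key k, Finset.sum_add_distrib,
    Finset.sum_ite_eq' Finset.univ (⟨t, ht⟩ : Fin m) w, if_pos (Finset.mem_univ _)]

/-- The nonpositive start case: the solution stays `≤ w 0` and the partial sums stay `≤ 0`. -/
lemma gmpb_nonpos {m : ℕ} (h0 : 0 < m) (w : Fin m → ℝ) (a : ℕ → ℝ)
    (ha : ∀ j, j + 1 < m → 0 < a j)
    (hR : ∀ (j : ℕ) (h : j + 1 < m), w ⟨j + 1, h⟩ = w ⟨j, Nat.lt_of_succ_lt h⟩
        + a j * ∑ k : Fin m, if (k : ℕ) < j + 1 then w k else 0)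
    (hw0 : w ⟨0, h0⟩ ≤ 0) :
    ∀ (j : ℕ) (h : j < m), w ⟨j, h⟩ ≤ w ⟨0, h0⟩ ∧
      (∑ k : Fin m, if (k : ℕ) < j + 1 then w k else 0) ≤ 0 := by
  intro j
  induction j with
  | zero =>
    intro h
    refine ⟨le_rfl, ?_⟩
    rw [gmpb_sum_ite_succ w 0 h]
    simpa using hw0
  | succ n ih =>
    intro h
    have hn : n < m := Nat.lt_of_succ_lt h
    obtain ⟨h1, h2⟩ := ih hn
    have h1' : w ⟨n, Nat.lt_of_succ_lt h⟩ ≤ w ⟨0, h0⟩ := h1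
    have hrec := hR n h
    have han := ha n h
    have hw1 : w ⟨n + 1, h⟩ ≤ w ⟨0, h0⟩ := by nlinarith
    refine ⟨hw1, ?_⟩
    rw [gmpb_sum_ite_succ w (n + 1) h]
    nlinarith

/-- The positive start case: the solution stays positive and partial sums stay positive. -/
lemma gmpb_pos {m : ℕ} (h0 : 0 < m) (w : Fin m → ℝ) (a : ℕ → ℝ)
    (ha : ∀ j, j + 1 < m → 0 < a j)
    (hR : ∀ (j : ℕ) (h : j + 1 < m), w ⟨j + 1, h⟩ = w ⟨j, Nat.lt_of_succ_lt h⟩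
        + a j * ∑ k : Fin m, if (k : ℕ) < j + 1 then w k else 0)
    (hw0 : 0 < w ⟨0, h0⟩) :
    ∀ (j : ℕ) (h : j < m), 0 < w ⟨j, h⟩ ∧
      0 < (∑ k : Fin m, if (k : ℕ) < j + 1 then w k else 0) := by
  intro j
  induction j with
  | zero =>
    intro h
    refine ⟨hw0, ?_⟩
    rw [gmpb_sum_ite_succ w 0 h]
    simpa using hw0
  | succ n ih =>
    intro h
    have hn : n < m := Nat.lt_of_succ_lt h
    obtain ⟨h1, h2⟩ := ih hn
    have h1' : (0 : ℝ) < w ⟨n, Nat.lt_of_succ_lt h⟩ := h1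
    have hrec := hR n h
    have han := ha n h
    have hw1 : 0 < w ⟨n + 1, h⟩ := by nlinarith
    refine ⟨hw1, ?_⟩
    rw [gmpb_sum_ite_succ w (n + 1) h]
    nlinarith

/-- Chaining a one-step monotonicity to get domination by the last entry. -/
lemma gmpb_le_last {m : ℕ} (h0 : 0 < m) (w : Fin m → ℝ)
    (mono : ∀ (j : ℕ) (h : j + 1 < m), w ⟨j, Nat.lt_of_succ_lt h⟩ ≤ w ⟨j + 1, h⟩) :
    ∀ (j : ℕ) (h : j < m), w ⟨j, h⟩ ≤ w ⟨m - 1, Nat.sub_lt h0 Nat.one_pos⟩ := by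
  have key : ∀ (d j : ℕ) (h : j < m), j + d = m - 1 →
      w ⟨j, h⟩ ≤ w ⟨m - 1, Nat.sub_lt h0 Nat.one_pos⟩ := by
    intro d
    induction d with
    | zero =>
      intro j h hj
      have hjm : j = m - 1 := by omega
      subst hjm
      exact le_rfl
    | succ n ih =>
      intro j h hj
      have h1 : j + 1 < m := by omega
      exact le_trans (mono j h1) (ih (j + 1) h1 (by omega))
  intro j h
  exact key (m - 1 - j) j h (by omega)

/-- For the Green's matrix `G_{ij} = 2(L - x_{max(i,j)})` and `κ > 0`, the matrix
`I + κG` is invertible and all components of `ψ = (I + κG)⁻¹ 1` lie in `(0,1]`. -/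
theorem greens_matrix_psi_bounds (m : ℕ) (hm : 1 ≤ m)
    (x : ℕ → ℝ) (L : ℝ) (hx0 : x 0 = 0) (hxL : x (m + 1) = L)
    (hxmono : ∀ j < m + 1, x j < x (j + 1))
    (G : Matrix (Fin m) (Fin m) ℝ)
    (hG : ∀ i j : Fin m, G i j = 2 * (L - x (max i.val j.val + 1)))
    (κ : ℝ) (hκ : 0 < κ) :
    IsUnit (1 + κ • G) ∧
    ∀ j : Fin m, (1 + κ • G)⁻¹.mulVec (fun _ => 1) j ∈ Set.Ioc (0 : ℝ) 1 := by
  have hm0 : 0 < m := hm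
  have hm1 : m - 1 < m := Nat.sub_lt hm0 Nat.one_pos
  have hLx : 0 < L - x m := by
    have := hxmono m (Nat.lt_succ_self m)
    rw [hxL] at this
    linarith
  have hstep : ∀ j : ℕ, j + 1 < m → 0 < 2 * κ * (x (j + 2) - x (j + 1)) := by
    intro j hj
    have := hxmono (j + 1) (by omega)
    nlinarith
  -- pointwise equations
  have hE : ∀ (w : Fin m → ℝ) (c : ℝ), (1 + κ • G).mulVec w = (fun _ => c) →
      ∀ i : Fin m, w i + κ * ∑ k : Fin m, G i k * w k = c := by
    intro w c hw i
    have h1 : (1 + κ • G).mulVec w i = w i + κ * ∑ k : Fin m, G i k * w k := by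
      rw [Matrix.add_mulVec, Matrix.one_mulVec, Matrix.smul_mulVec]
      simp [Matrix.mulVec, dotProduct]
    rw [← h1]
    exact congrFun hw i
  -- the recurrence from differencing consecutive equations
  have hR1 : ∀ (w : Fin m → ℝ) (c : ℝ), ((1 + κ • G).mulVec w = fun _ => c) →
      ∀ (j : ℕ) (h : j + 1 < m),
        w ⟨j + 1, h⟩ = w ⟨j, Nat.lt_of_succ_lt h⟩ +
          (2 * κ * (x (j + 2) - x (j + 1))) *
            (∑ k : Fin m, if (k : ℕ) < j + 1 then w k else 0) := by
    intro w c hw j h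
    have E1 := hE w c hw ⟨j, Nat.lt_of_succ_lt h⟩
    have E2 := hE w c hw ⟨j + 1, h⟩
    have hdiff : ∀ k : Fin m,
        G ⟨j, Nat.lt_of_succ_lt h⟩ k * w k - G ⟨j + 1, h⟩ k * w k
          = 2 * (x (j + 2) - x (j + 1)) * (if (k : ℕ) < j + 1 then w k else 0) := by
      intro k
      rw [hG, hG]
      simp only [Fin.val_mk]
      rcases Nat.lt_or_ge (k : ℕ) (j + 1) with hk | hk
      · rw [if_pos hk]
        have e1 : max j (k : ℕ) = j := Nat.max_eq_left (by omega)
        have e2 : max (j + 1) (k : ℕ) = j + 1 := Nat.max_eq_left (by omega)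
        rw [e1, e2]
        ring
      · rw [if_neg (by omega)]
        have e1 : max j (k : ℕ) = (k : ℕ) := Nat.max_eq_right (by omega)
        have e2 : max (j + 1) (k : ℕ) = (k : ℕ) := Nat.max_eq_right (by omega)
        rw [e1, e2]
        ring
    have hsum : (∑ k : Fin m, G ⟨j, Nat.lt_of_succ_lt h⟩ k * w k)
        - (∑ k : Fin m, G ⟨j + 1, h⟩ k * w k)
        = 2 * (x (j + 2) - x (j + 1)) *
            ∑ k : Fin m, (if (k : ℕ) < j + 1 then w k else 0) := by
      rw [← Finset.sum_sub_distrib, Finset.mul_sum]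
      exact Finset.sum_congr rfl fun k _ => hdiff k
    linear_combination E2 - E1 + κ * hsum
  -- the last equation
  have hR2 : ∀ (w : Fin m → ℝ) (c : ℝ), ((1 + κ • G).mulVec w = fun _ => c) →
      w ⟨m - 1, hm1⟩ + 2 * κ * (L - x m) * (∑ k : Fin m, w k) = c := by
    intro w c hw
    have E := hE w c hw ⟨m - 1, hm1⟩
    have hrow : ∀ k : Fin m, G ⟨m - 1, hm1⟩ k * w k = 2 * (L - x m) * w k := by
      intro k
      rw [hG]
      simp only [Fin.val_mk]
      have h1 : max (m - 1) (k : ℕ) + 1 = m := by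
        have hk := k.isLt
        omega
      rw [h1]
    have hsum : (∑ k : Fin m, G ⟨m - 1, hm1⟩ k * w k)
        = 2 * (L - x m) * ∑ k : Fin m, w k := by
      rw [Finset.mul_sum]
      exact Finset.sum_congr rfl fun k _ => hrow k
    linear_combination E - κ * hsum
  -- the full truncated sum is the full sum
  have hTm : ∀ w : Fin m → ℝ,
      (∑ k : Fin m, if (k : ℕ) < (m - 1) + 1 then w k else 0) = ∑ k : Fin m, w k := by
    intro w
    refine Finset.sum_congr rfl fun k _ => ?_
    rw [if_pos (by have := k.isLt; omega)]
  -- invertibility via trivial kernel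
  have hdet : IsUnit (1 + κ • G).det := by
    rw [isUnit_iff_ne_zero]
    intro h0det
    obtain ⟨v, hv0, hv⟩ := (Matrix.exists_mulVec_eq_zero_iff).mpr h0det
    have hv' : (1 + κ • G).mulVec v = fun _ => (0 : ℝ) := hv
    have hR2v := hR2 v 0 hv'
    rw [← hTm v] at hR2v
    rcases le_or_gt (v ⟨0, hm0⟩) 0 with hle | hpos
    · have C := gmpb_nonpos hm0 v _ hstep (hR1 v 0 hv') hle
      have hCm := C (m - 1) hm1
      have h1 : v ⟨m - 1, hm1⟩ ≤ 0 := le_trans hCm.1 hle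
      have hco : 0 < 2 * κ * (L - x m) := by nlinarith
      have hvm : v ⟨m - 1, hm1⟩ = 0 := by nlinarith [hCm.2]
      have hS0 : (∑ k : Fin m, if (k : ℕ) < (m - 1) + 1 then v k else 0) = 0 := by
        nlinarith [hCm.2]
      rw [hTm v] at hS0
      have hall := (Finset.sum_eq_zero_iff_of_nonpos
        (fun k _ => le_trans ((C k.val k.isLt).1 : v ⟨k.val, k.isLt⟩ ≤ v ⟨0, hm0⟩) hle)).mp hS0
      exact hv0 (funext fun k => hall k (Finset.mem_univ k))
    · have D := gmpb_pos hm0 v _ hstep (hR1 v 0 hv') hpos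
      have hDm := D (m - 1) hm1
      have hco : 0 < 2 * κ * (L - x m) := by nlinarith
      nlinarith [hDm.1, hDm.2]
  have hUnit : IsUnit (1 + κ • G) := (Matrix.isUnit_iff_isUnit_det _).mpr hdet
  refine ⟨hUnit, ?_⟩
  set ψ : Fin m → ℝ := (1 + κ • G)⁻¹.mulVec (fun _ => 1) with hψdef
  have hψeq : (1 + κ • G).mulVec ψ = fun _ => (1 : ℝ) := by
    rw [hψdef, Matrix.mulVec_mulVec, Matrix.mul_nonsing_inv _ hdet, Matrix.one_mulVec]
  have hR2ψ := hR2 ψ 1 hψeq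
  rw [← hTm ψ] at hR2ψ
  have hco : 0 < 2 * κ * (L - x m) := by nlinarith
  have hψ0 : 0 < ψ ⟨0, hm0⟩ := by
    by_contra hle
    push_neg at hle
    have C := gmpb_nonpos hm0 ψ _ hstep (hR1 ψ 1 hψeq) hle
    have hCm := C (m - 1) hm1
    nlinarith [hCm.1, hCm.2]
  have D := gmpb_pos hm0 ψ _ hstep (hR1 ψ 1 hψeq) hψ0
  have mono : ∀ (j : ℕ) (h : j + 1 < m),
      ψ ⟨j, Nat.lt_of_succ_lt h⟩ ≤ ψ ⟨j + 1, h⟩ := by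
    intro j h
    have hrec := hR1 ψ 1 hψeq j h
    have hS := (D j (Nat.lt_of_succ_lt h)).2
    have hs := hstep j h
    nlinarith
  have hlast : ψ ⟨m - 1, hm1⟩ < 1 := by
    have hS := (D (m - 1) hm1).2
    nlinarith
  intro j
  rw [Set.mem_Ioc]
  constructor
  · exact ((D j.val j.isLt).1 : 0 < ψ ⟨j.val, j.isLt⟩)
  · exact le_of_lt (lt_of_le_of_lt
      ((gmpb_le_last hm0 ψ mono j.val j.isLt : ψ ⟨j.val, j.isLt⟩ ≤ ψ ⟨m - 1, _⟩)) hlast)
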